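/- Let G be a subgroup of A × B × C and suppose that for every g = (g_A, g_B, g_C) ∈ G there exists an element of the form (g_A, b, 1) ∈ G for some b ∈ B (i.e. π_A(S_AB) = π_A(G) where S_AB = {(a,b,1) ∈ G}). Then G = S_AB · S_BC, where S_BC = {(1,b,c) ∈ G}. Consequently the quotient G/(S_AB · S_AC · S_BC) is trivial. -/

import Mathlib

theorem Subgroup.exists_mul_of_fst_eq {P Q : Type*} [Group P] [Group Q] (G : Subgroup (P × Q))
    {g x : P × Q} (hg : g ∈ G) (hx : x ∈ G) (hfst : x.1 = g.1) :
    ∃ y ∈ G, y.1 = 1 ∧ g = x * y :=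
  ⟨x⁻¹ * g, G.mul_mem (G.inv_mem hx) hg, by simp [hfst], (mul_inv_cancel_left x g).symm⟩

theorem stmt11 {A B C : Type*} [Group A] [Group B] [Group C]
    (G N : Subgroup (A × B × C))
    (hsat : ∀ g ∈ G, ∃ b : B, ((g : A × B × C).1, b, (1 : C)) ∈ G)
    (hN : ∀ g : A × B × C, g ∈ N ↔
      ∃ x ∈ G, ∃ y ∈ G, ∃ z ∈ G, x.2.2 = 1 ∧ y.2.1 = 1 ∧ z.1 = 1 ∧ g = x * y * z) :
    (∀ g ∈ G, ∃ x ∈ G, ∃ y ∈ G, x.2.2 = 1 ∧ y.1 = 1 ∧ g = x * y) ∧ G ≤ N := by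
  have factor : ∀ g ∈ G, ∃ x ∈ G, ∃ y ∈ G, x.2.2 = 1 ∧ y.1 = 1 ∧ g = x * y := by
    intro g hg
    obtain ⟨b, hb⟩ := hsat g hg
    obtain ⟨y, hy, hy1, hgy⟩ := G.exists_mul_of_fst_eq hg hb rfl
    exact ⟨_, hb, y, hy, rfl, hy1, hgy⟩
  refine ⟨factor, fun g hg => ?_⟩
  obtain ⟨x, hx, y, hy, hx3, hy1, rfl⟩ := factor g hg
  exact (hN _).mpr ⟨x, hx, 1, G.one_mem, y, hy, hx3, rfl, hy1, by rw [mul_one]⟩
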